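/- arXiv:2009.06612 — 6 statements merged into one kernel-verified Lean document; each statement's English description precedes it below -/
import Mathlib

section
/- For every integer n > 0, the sum over all weakly decreasing tuples (λ₁, λ₂, ..., λₙ) of nonnegative integers with λ₁ + λ₂ + ... + λₙ = n of the product C(λ₁,λ₂)·C(λ₂,λ₃)···C(λₙ₋₁,λₙ)·C(λₙ,0) equals 2^(n-1). -/
/-!
Since `C(a, b) = 0` for `a < b`, the binomial product vanishes off weakly decreasing tuples, so the
sum may run over all `n`-tuples with sum `n`. Splitting off the first entry, the sums
`F(L, a, m) = ∑ C(a, s₁) C(s₁, s₂) ⋯ C(s_L, 0)` over `L`-tuples `s` with sum `m` satisfy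
`F(L + 1, a, m) = ∑_{b + c = m} C(a, b) F(L, b, c)`. By Vandermonde's identity the multiset
coefficients `C(a + m - 1, m)` obey the same recursion, so `F(L, a, m) = C(a + m - 1, m)` as long as
`m ≤ L`, and the theorem becomes `∑_{b + c = n} C(n - 1, c) = 2 ^ (n - 1)`.
-/

open Finset

/-- Weakly decreasing tuples `(λ₁,…,λₙ)` of nonnegative integers with `λ₁+⋯+λₙ = n`. -/
def partitionTuples (n : ℕ) : Finset (Fin n → ℕ) :=
  (Finset.Nat.antidiagonalTuple n n).filter fun t => ∀ i j : Fin n, i ≤ j → t j ≤ t i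

/-- The product `C(λ₁,λ₂)·C(λ₂,λ₃)⋯C(λₙ,0)` with the convention `λ_{n+1} = 0`. -/
def binomProd (n : ℕ) (t : Fin n → ℕ) : ℕ :=
  ∏ i : Fin n, Nat.choose (t i) (if h : (i : ℕ) + 1 < n then t ⟨(i : ℕ) + 1, h⟩ else 0)

theorem Finset.Nat.sum_antidiagonalTuple_succ {M : Type*} [AddCommMonoid M] (k n : ℕ)
    (f : (Fin (k + 1) → ℕ) → M) :
    ∑ t ∈ Nat.antidiagonalTuple (k + 1) n, f t =
      ∑ p ∈ antidiagonal n, ∑ s ∈ Nat.antidiagonalTuple k p.2, f (Fin.cons p.1 s) := by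
  change (List.map f (List.Nat.antidiagonalTuple (k + 1) n)).sum =
    (List.map (fun p : ℕ × ℕ => (List.map (fun s => f (Fin.cons p.1 s))
      (List.Nat.antidiagonalTuple k p.2)).sum) (List.Nat.antidiagonal n)).sum
  simp only [List.Nat.antidiagonalTuple, List.flatMap_def, List.map_flatten, List.sum_flatten,
    List.map_map, Function.comp_def]

theorem Nat.multichoose_eq_sum_antidiagonal (a m : ℕ) :
    a.multichoose m = ∑ p ∈ antidiagonal m, a.choose p.1 * p.1.multichoose p.2 := by
  rcases m.eq_zero_or_pos with rfl | hm
  · simp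
  rw [Nat.multichoose_eq, show a + m - 1 = a + (m - 1) by omega, Nat.add_choose_eq]
  refine sum_congr rfl fun p hp => ?_
  rw [HasAntidiagonal.mem_antidiagonal] at hp
  rw [Nat.multichoose_eq, ← hp]

theorem Nat.sum_antidiagonal_multichoose (n : ℕ) :
    ∑ p ∈ antidiagonal (n + 1), p.1.multichoose p.2 = 2 ^ n := by
  calc ∑ p ∈ antidiagonal (n + 1), p.1.multichoose p.2
      = ∑ p ∈ antidiagonal (n + 1), n.choose p.swap.1 := by
        refine sum_congr rfl fun p hp => ?_
        rw [HasAntidiagonal.mem_antidiagonal] at hp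
        rw [Nat.multichoose_eq, hp, Prod.fst_swap, Nat.add_sub_cancel]
    _ = ∑ k ∈ range (n + 2), n.choose k := by
        rw [Nat.sum_antidiagonal_swap (f := fun p => n.choose p.1),
          Nat.sum_antidiagonal_eq_sum_range_succ_mk]
    _ = 2 ^ n := by
        rw [sum_range_succ, Nat.sum_range_choose, Nat.choose_succ_self, add_zero]

theorem binomProd_one (t : Fin 1 → ℕ) : binomProd 1 t = 1 := by
  simp [binomProd]

theorem binomProd_cons (L a : ℕ) (s : Fin (L + 1) → ℕ) :
    binomProd (L + 2) (Fin.cons a s) = a.choose (s 0) * binomProd (L + 1) s := by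
  unfold binomProd
  rw [Fin.prod_univ_succ]
  congr 1
  refine prod_congr rfl fun i _ => ?_
  by_cases h : (i : ℕ) + 1 < L + 1
  · rw [dif_pos (by simpa using h), dif_pos h]
    rfl
  · rw [dif_neg (by simpa using h), dif_neg h]
    rfl

theorem antitone_of_binomProd_ne_zero {n : ℕ} {t : Fin n → ℕ} (h : binomProd n t ≠ 0) :
    Antitone t := by
  rcases n with _ | n
  · exact fun i => i.elim0
  refine Fin.antitone_iff_succ_le.mpr fun i => ?_
  have := prod_ne_zero_iff.mp h i.castSucc (mem_univ _)
  rw [dif_pos (by simp), Ne, Nat.choose_eq_zero_iff, not_lt] at this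
  exact this

def binomProdConsSum (L a m : ℕ) : ℕ :=
  ∑ s ∈ Nat.antidiagonalTuple L m, binomProd (L + 1) (Fin.cons a s)

theorem binomProdConsSum_succ (L a m : ℕ) :
    binomProdConsSum (L + 1) a m =
      ∑ p ∈ antidiagonal m, a.choose p.1 * binomProdConsSum L p.1 p.2 := by
  simp only [binomProdConsSum, binomProd_cons, mul_sum]
  exact Nat.sum_antidiagonalTuple_succ L m _

-- The case `a = 0` is needed for the term `b = 0` of the recursion, where `c = m` may exceed `L`.
theorem binomProdConsSum_eq_multichoose {L a m : ℕ} (h : m ≤ L ∨ a = 0) :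
    binomProdConsSum L a m = a.multichoose m := by
  induction L generalizing a m with
  | zero =>
    rcases m with _ | m
    · simp [binomProdConsSum, binomProd_one]
    · obtain rfl : a = 0 := h.resolve_left (by omega)
      simp [binomProdConsSum]
  | succ L ih =>
    rw [binomProdConsSum_succ, Nat.multichoose_eq_sum_antidiagonal]
    refine sum_congr rfl fun p hp => ?_
    rw [HasAntidiagonal.mem_antidiagonal] at hp
    obtain ⟨b, c⟩ := p
    rcases b.eq_zero_or_pos with rfl | hb
    · rw [ih (Or.inr rfl)]
    rcases h with hm | rfl
    · rw [ih (Or.inl (by simp only at hp ⊢; omega))]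
    · rw [Nat.choose_eq_zero_of_lt hb, zero_mul, zero_mul]

theorem stmt0 (n : ℕ) (hn : 0 < n) :
    ∑ t ∈ partitionTuples n, binomProd n t = 2 ^ (n - 1) := by
  obtain ⟨L, rfl⟩ : ∃ L, n = L + 1 := ⟨n - 1, by omega⟩
  calc ∑ t ∈ partitionTuples (L + 1), binomProd (L + 1) t
      = ∑ t ∈ Nat.antidiagonalTuple (L + 1) (L + 1), binomProd (L + 1) t :=
        sum_filter_of_ne fun _ _ h => antitone_of_binomProd_ne_zero h
    _ = ∑ p ∈ antidiagonal (L + 1), binomProdConsSum L p.1 p.2 :=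
        Nat.sum_antidiagonalTuple_succ _ _ _
    _ = ∑ p ∈ antidiagonal (L + 1), p.1.multichoose p.2 := by
        refine sum_congr rfl fun p hp => binomProdConsSum_eq_multichoose ?_
        rw [HasAntidiagonal.mem_antidiagonal] at hp
        omega
    _ = 2 ^ (L + 1 - 1) := Nat.sum_antidiagonal_multichoose L
end

section
/- For every integer n > 1, the sum over all weakly decreasing tuples (λ₁, λ₂, ..., λₙ) of nonnegative integers with λ₁ + λ₂ + ... + λₙ = n and λ₁ odd of the product C(λ₁,λ₂)·C(λ₂,λ₃)···C(λₙ,0) multiplied by the rational number n/λ₁ equals 2^(n-1). -/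
open Finset

/-!
Group the tuples by their first (largest) part `k`. Removing the first entry of a tuple with
largest part `k` and sum `k + r` leaves a tuple of sum `r` whose largest part `j` is at most `k`,
and the binomial product acquires the factor `C(k, j)`. This recursion, solved with
Vandermonde's identity, shows that the total weight with largest part `k` is `C(s - 1, k - 1)`
whenever the tuples are long enough. Hence the sum is
`∑_{k odd} C(n - 1, k - 1) · n / k = ∑_{k odd} C(n, k) = 2 ^ (n - 1)`.
-/

def decreasingTuples (m s : ℕ) : Finset (Fin m → ℕ) :=
  (Finset.Nat.antidiagonalTuple m s).filter fun t => ∀ i j : Fin m, i ≤ j → t j ≤ t i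

lemma partitionTuples_eq_decreasingTuples (n : ℕ) : partitionTuples n = decreasingTuples n n :=
  rfl

lemma mem_decreasingTuples {m s : ℕ} {t : Fin m → ℕ} :
    t ∈ decreasingTuples m s ↔ ∑ i, t i = s ∧ Antitone t := by
  simp [decreasingTuples, Finset.Nat.mem_antidiagonalTuple, Antitone]

lemma head_le_of_mem_decreasingTuples {m s : ℕ} {t : Fin (m + 1) → ℕ}
    (ht : t ∈ decreasingTuples (m + 1) s) : t 0 ≤ s :=
  (mem_decreasingTuples.1 ht).1 ▸ single_le_sum (fun i _ => Nat.zero_le (t i)) (mem_univ 0)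

lemma decreasingTuples_zero (m : ℕ) : decreasingTuples m 0 = {0} := by
  ext t
  simp only [mem_decreasingTuples, sum_eq_zero_iff, mem_univ, true_implies, mem_singleton]
  exact ⟨fun h => funext h.1, fun h => h ▸ ⟨fun _ => rfl, antitone_const⟩⟩

lemma decreasingTuples_filter_head_eq_map_cons (m k r : ℕ) :
    (decreasingTuples (m + 2) (k + r)).filter (fun t => t 0 = k) =
      ((decreasingTuples (m + 1) r).filter (fun u => u 0 ≤ k)).map
        ⟨Fin.cons k, Fin.cons_right_injective (α := fun _ => ℕ) k⟩ := by
  ext t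
  simp only [mem_filter, mem_map, mem_decreasingTuples, Function.Embedding.coeFn_mk]
  constructor
  · rintro ⟨⟨hsum, hanti⟩, rfl⟩
    refine ⟨Fin.tail t, ⟨⟨?_, hanti.comp_monotone (Fin.strictMono_succ.monotone)⟩, ?_⟩,
      Fin.cons_self_tail t⟩
    · rw [Fin.sum_univ_succ] at hsum
      simpa [Fin.tail] using hsum
    · exact hanti (Fin.zero_le _)
  · rintro ⟨u, ⟨⟨rfl, hanti⟩, hk⟩, rfl⟩
    refine ⟨⟨by simp [Fin.sum_cons], ?_⟩, rfl⟩
    exact antitone_vecCons.2 ⟨hk, hanti⟩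

lemma binomProd_succ (m : ℕ) (t : Fin (m + 2) → ℕ) :
    binomProd (m + 2) t = (t 0).choose (t 1) * binomProd (m + 1) (Fin.tail t) := by
  rw [binomProd, Fin.prod_univ_succ, binomProd]
  congr 1
  refine prod_congr rfl fun i _ => ?_
  by_cases h : (i : ℕ) + 1 < m + 1
  · rw [dif_pos (by simpa using h), dif_pos h]
    rfl
  · rw [dif_neg (by simpa using h), dif_neg h]
    rfl

def largestPartWeight (m s k : ℕ) : ℕ :=
  ∑ t ∈ (decreasingTuples (m + 1) s).filter (fun t => t 0 = k), binomProd (m + 1) t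

lemma sum_decreasingTuples_binomProd_mul {R : Type*} [CommSemiring R] (m s : ℕ) (f : ℕ → R) :
    ∑ t ∈ decreasingTuples (m + 1) s, (binomProd (m + 1) t : R) * f (t 0) =
      ∑ k ∈ range (s + 1), (largestPartWeight m s k : R) * f k := by
  rw [← sum_fiberwise_of_maps_to (g := fun t => t 0)
    fun t ht => mem_range_succ_iff.2 (head_le_of_mem_decreasingTuples ht)]
  refine sum_congr rfl fun k _ => ?_
  rw [largestPartWeight, Nat.cast_sum, sum_mul]
  exact sum_congr rfl fun t ht => by rw [(mem_filter.1 ht).2]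

lemma largestPartWeight_eq_zero_of_lt {m s k : ℕ} (h : s < k) : largestPartWeight m s k = 0 :=
  sum_eq_zero fun _ ht =>
    absurd ((mem_filter.1 ht).2 ▸ head_le_of_mem_decreasingTuples (mem_filter.1 ht).1) h.not_ge

lemma largestPartWeight_of_sum_zero (m k : ℕ) :
    largestPartWeight m 0 k = if k = 0 then 1 else 0 := by
  rw [largestPartWeight, decreasingTuples_zero]
  split_ifs with hk <;> simp [hk, binomProd, filter_singleton, eq_comm]

lemma largestPartWeight_zero_of_ne_zero {m s : ℕ} (hs : s ≠ 0) :
    largestPartWeight m s 0 = 0 := by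
  refine sum_eq_zero fun t ht => ?_
  obtain ⟨⟨hsum, hanti⟩, h0⟩ := mem_filter.1 ht |>.imp_left mem_decreasingTuples.1
  have : t = 0 := funext fun i => Nat.le_zero.1 (h0 ▸ hanti (Fin.zero_le i))
  simp [this] at hsum
  exact absurd hsum.symm hs

lemma largestPartWeight_succ_eq_sum (m k r : ℕ) :
    largestPartWeight (m + 1) (k + r) k =
      ∑ j ∈ range (k + 1), k.choose j * largestPartWeight m r j := by
  rw [largestPartWeight, decreasingTuples_filter_head_eq_map_cons, sum_map,
    ← sum_fiberwise_of_maps_to (s := (decreasingTuples (m + 1) r).filter (fun u => u 0 ≤ k))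
      (g := fun u => u 0) (t := range (k + 1)) fun u hu => mem_range_succ_iff.2 (mem_filter.1 hu).2]
  refine sum_congr rfl fun j hj => ?_
  rw [largestPartWeight, mul_sum, filter_filter]
  refine sum_congr (filter_congr fun u _ => ?_) fun u hu => ?_
  · exact ⟨fun h => h.2, fun h => ⟨h ▸ mem_range_succ_iff.1 hj, h⟩⟩
  · simp [binomProd_succ, (mem_filter.1 hu).2]

lemma sum_range_choose_succ_mul_choose (k r : ℕ) :
    ∑ j ∈ range (k + 1), (k + 1).choose (j + 1) * r.choose j = (k + 1 + r).choose k := by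
  rw [Nat.add_choose_eq, ← Nat.sum_antidiagonal_swap]
  simp only [Prod.fst_swap, Prod.snd_swap]
  rw [Nat.sum_antidiagonal_eq_sum_range_succ fun i j => (k + 1).choose j * r.choose i]
  refine sum_congr rfl fun j hj => ?_
  have hjk := mem_range_succ_iff.1 hj
  rw [Nat.choose_symm_of_eq_add (by omega : k + 1 = k - j + (j + 1))]

lemma largestPartWeight_eq_choose {m s : ℕ} (k : ℕ) (hs : s ≤ m) :
    largestPartWeight m (s + 1) (k + 1) = s.choose k := by
  induction m generalizing s k with
  | zero =>
    obtain rfl : s = 0 := Nat.le_zero.1 hs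
    rcases k with _ | k
    · decide
    · exact largestPartWeight_eq_zero_of_lt (by omega)
  | succ m ih =>
    rcases lt_or_ge s k with hsk | hks
    · rw [largestPartWeight_eq_zero_of_lt (by omega), Nat.choose_eq_zero_of_lt hsk]
    obtain ⟨r, rfl⟩ := Nat.exists_eq_add_of_le hks
    rw [show k + r + 1 = k + 1 + r by omega, largestPartWeight_succ_eq_sum]
    rcases r with _ | r
    · rw [sum_eq_single 0 (fun j _ hj => by simp [largestPartWeight_of_sum_zero, hj]) (by simp)]
      simp [largestPartWeight_of_sum_zero]
    · rw [sum_range_succ', largestPartWeight_zero_of_ne_zero r.succ_ne_zero, mul_zero, add_zero,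
        show k + (r + 1) = k + 1 + r by omega, ← sum_range_choose_succ_mul_choose]
      exact sum_congr rfl fun j _ => by rw [ih j (by omega)]

lemma sum_range_filter_odd_choose {n : ℕ} (hn : n ≠ 0) :
    ∑ k ∈ range (n + 1) with Odd k, n.choose k = 2 ^ (n - 1) := by
  have hodd (k : ℕ) : (n.choose k : ℤ) - (-1) ^ k * n.choose k =
      2 * if Odd k then (n.choose k : ℤ) else 0 := by
    rcases Nat.even_or_odd k with h | h
    · simp [h.neg_one_pow, Nat.not_odd_iff_even.2 h]
    · simp [h.neg_one_pow, h]
      ring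
  have htwice : 2 * ∑ k ∈ range (n + 1) with Odd k, n.choose k = 2 ^ n := by
    have := Int.alternating_sum_range_choose_of_ne hn
    zify
    rw [sum_filter, mul_sum, ← sum_congr rfl fun k _ => hodd k, sum_sub_distrib, this, sub_zero]
    exact_mod_cast Nat.sum_range_choose n
  have hpow : 2 ^ n = 2 * 2 ^ (n - 1) := by
    rw [← pow_succ', Nat.sub_add_cancel (Nat.pos_of_ne_zero hn)]
  omega

lemma cast_choose_mul_succ_div_succ {K : Type*} [Field K] [CharZero K] (m k : ℕ) :
    (m.choose k : K) * ((m + 1) / (k + 1)) = (m + 1).choose (k + 1) := by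
  rw [mul_div_assoc', div_eq_iff (by exact_mod_cast k.succ_ne_zero), mul_comm]
  exact_mod_cast Nat.add_one_mul_choose_eq m k

theorem stmt5 (n : ℕ) (hn : 1 < n) :
    ∑ t ∈ (partitionTuples n).filter (fun t => Odd (t ⟨0, Nat.zero_lt_of_lt hn⟩)),
      (binomProd n t : ℚ) * ((n : ℚ) / (t ⟨0, Nat.zero_lt_of_lt hn⟩ : ℚ))
      = 2 ^ (n - 1) := by
  obtain ⟨m, rfl⟩ : ∃ m, n = m + 1 := ⟨n - 1, by omega⟩
  have hterm (k : ℕ) :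
      (largestPartWeight m (m + 1) k : ℚ) * (if Odd k then (m + 1 : ℚ) / k else 0) =
        if Odd k then ((m + 1).choose k : ℚ) else 0 := by
    rcases k with _ | k
    · simp
    · split_ifs
      · rw [largestPartWeight_eq_choose k le_rfl]
        push_cast
        exact cast_choose_mul_succ_div_succ m k
      · rw [mul_zero]
  calc _ = ∑ t ∈ decreasingTuples (m + 1) (m + 1),
        (binomProd (m + 1) t : ℚ) * (if Odd (t 0) then (m + 1 : ℚ) / t 0 else 0) := by
          rw [partitionTuples_eq_decreasingTuples, sum_filter]
          refine sum_congr rfl fun t _ => ?_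
          split_ifs <;> simp_all
    _ = ∑ k ∈ range (m + 2) with Odd k, ((m + 1).choose k : ℚ) := by
          rw [sum_decreasingTuples_binomProd_mul m (m + 1)
            fun k => if Odd k then (m + 1 : ℚ) / k else 0, sum_filter]
          exact sum_congr rfl fun k _ => hterm k
    _ = 2 ^ (m + 1 - 1) := by exact_mod_cast sum_range_filter_odd_choose m.succ_ne_zero
end

section
/- For every integer n > 0, the sum over all weakly decreasing tuples (λ₁, λ₂, ..., λₙ) of nonnegative integers with λ₁ + λ₂ + ... + λₙ = n of the rational quantity C(λ₁,λ₂)·C(λ₂,λ₃)···C(λₙ,0) · (n/λ₁) · ∏_{i=1}^{n} (|2i−3|/i)^{λᵢ} equals 2^(n-1). -/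
open Finset

/-!
Read a partition `λ` of `m` column by column. With `b_j = ∏_{i<j} factor i`, the coefficient of
`x^j` in `1 - √(1 - 2x)`, the product `∏ factor i ^ λ_i` is the product of `b_j` over the columns,
and `∏ C(λ_i, λ_{i+1})` counts the orderings of the columns. Removing a column of length `j`
multiplies that count by `c_j / λ₁`, where `c_j` is the number of columns of length `j`; since
`∑ c_j (m - j) = m (λ₁ - 1)`, the weighted sum `Q m` over partitions of `m` satisfies
`Q m = m b_m + ∑_{0<j<m} b_j Q (m - j)`, the term `m b_m` coming from the one-column partition.
The powers `2^(m-1)` satisfy the same recursion because `(j + 1) b_{j+1} = (2j - 1) b_j`.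
-/

def column (j : ℕ) : ℕ → ℕ := fun i => if i < j then 1 else 0

lemma antitone_column (j : ℕ) : Antitone (column j) := by
  intro a b hab
  simp only [column]
  split_ifs <;> omega

lemma range_filter_lt {N j : ℕ} (hj : j ≤ N) : (range N).filter (· < j) = range j := by
  ext i
  simp only [mem_filter, mem_range]
  omega

lemma sum_range_column {N j : ℕ} (hj : j ≤ N) : ∑ i ∈ range N, column j i = j := by
  simp only [column]
  rw [sum_boole, range_filter_lt hj, card_range, Nat.cast_id]

lemma column_le_of_antitone {f : ℕ → ℕ} {j : ℕ} (hf : Antitone f) (h : 1 ≤ f (j - 1)) :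
    column j ≤ f := by
  intro i
  simp only [column]
  split_ifs with hi
  · exact h.trans (hf (by omega))
  · exact Nat.zero_le _

def zeroExtend {N : ℕ} (t : Fin N → ℕ) : ℕ → ℕ := fun k => if h : k < N then t ⟨k, h⟩ else 0

lemma zeroExtend_coe {N : ℕ} (t : Fin N → ℕ) (i : Fin N) : zeroExtend t i = t i :=
  dif_pos i.isLt

lemma zeroExtend_injective (N : ℕ) : Function.Injective (zeroExtend (N := N)) := by
  intro s t h
  funext i
  simpa only [zeroExtend_coe] using congrFun h i

/-- Partitions of `m` into at most `N` parts, as zero-extended antitone functions; `shapes n n` is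
`(partitionTuples n).map ⟨zeroExtend, _⟩` by definition. -/
def shapes (N m : ℕ) : Finset (ℕ → ℕ) :=
  ((Finset.Nat.antidiagonalTuple N m).filter fun t => ∀ i j : Fin N, i ≤ j → t j ≤ t i).map
    ⟨zeroExtend, zeroExtend_injective N⟩

section Shapes

variable {N m j : ℕ} {f : ℕ → ℕ}

lemma mem_shapes :
    f ∈ shapes N m ↔ Antitone f ∧ (∀ i, N ≤ i → f i = 0) ∧ ∑ i ∈ range N, f i = m := by
  simp only [shapes, mem_map, mem_filter, Finset.Nat.mem_antidiagonalTuple,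
    Function.Embedding.coeFn_mk]
  constructor
  · rintro ⟨t, ⟨hsum, hmono⟩, rfl⟩
    refine ⟨fun a b hab => ?_, fun i hi => dif_neg (by omega), ?_⟩
    · simp only [zeroExtend]
      split_ifs with hb ha
      · exact hmono ⟨a, ha⟩ ⟨b, hb⟩ hab
      · omega
      · exact Nat.zero_le _
      · exact le_rfl
    · rw [← hsum, ← Fin.sum_univ_eq_sum_range]
      exact sum_congr rfl fun i _ => zeroExtend_coe t i
  · rintro ⟨hanti, hsupp, hsum⟩
    refine ⟨fun i => f i, ⟨?_, fun i j hij => hanti hij⟩, ?_⟩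
    · rw [Fin.sum_univ_eq_sum_range (fun i => f i), hsum]
    · funext k
      simp only [zeroExtend]
      split_ifs with h
      · rfl
      · exact (hsupp k (by omega)).symm

lemma column_mem_shapes (hj : j ≤ N) : column j ∈ shapes N j :=
  mem_shapes.2 ⟨antitone_column j, fun i hi => if_neg (by omega), sum_range_column hj⟩

lemma succ_mul_le_sum_range (hf : Antitone f) (k : ℕ) :
    (k + 1) * f k ≤ ∑ i ∈ range (k + 1), f i := by
  simpa using card_nsmul_le_sum (range (k + 1)) f (f k) fun i hi => hf (by simp at hi; omega)

lemma sum_range_le_of_mem_shapes (hf : f ∈ shapes N m) (K : ℕ) : ∑ i ∈ range K, f i ≤ m := by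
  obtain ⟨-, hsupp, hsum⟩ := mem_shapes.1 hf
  rw [← hsum]
  rcases le_total K N with h | h
  · exact sum_le_sum_of_subset (range_subset_range.2 h)
  · exact (sum_subset (range_subset_range.2 h) fun i _ hi => hsupp i (by simpa using hi)).ge

lemma eq_zero_of_mem_shapes (hf : f ∈ shapes N m) {i : ℕ} (hi : m ≤ i) : f i = 0 := by
  have h1 := succ_mul_le_sum_range (mem_shapes.1 hf).1 i
  have h2 := sum_range_le_of_mem_shapes hf (i + 1)
  by_contra h
  have : i + 1 ≤ (i + 1) * f i := Nat.le_mul_of_pos_right _ (by omega)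
  omega

lemma sum_range_self_of_mem_shapes (hf : f ∈ shapes N m) (hm : m ≤ N) :
    ∑ i ∈ range m, f i = m := by
  rw [sum_subset (range_subset_range.2 hm) fun i _ hi =>
    eq_zero_of_mem_shapes hf (by simpa using hi)]
  exact (mem_shapes.1 hf).2.2

lemma pos_of_mem_shapes (hf : f ∈ shapes N m) (hm : 0 < m) : 0 < f 0 := by
  obtain ⟨hanti, -, hsum⟩ := mem_shapes.1 hf
  by_contra h
  have hzero : ∀ i ∈ range N, f i = 0 := fun i _ => Nat.le_zero.1 ((hanti (Nat.zero_le i)).trans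
    (not_lt.1 h))
  rw [sum_eq_zero hzero] at hsum
  omega

lemma eq_column_of_mem_shapes (hf : f ∈ shapes N m) (h1 : f 0 ≤ 1) : f = column m := by
  obtain ⟨hanti, hsupp, hsum⟩ := mem_shapes.1 hf
  have hex : ∃ k, f k = 0 := ⟨N, hsupp N le_rfl⟩
  have hcol : f = column (Nat.find hex) := by
    funext i
    simp only [column]
    split_ifs with h
    · have := Nat.find_min hex h
      have := hanti (Nat.zero_le i)
      omega
    · exact Nat.le_zero.1 ((hanti (not_lt.1 h)).trans (Nat.find_spec hex).le)
  rw [hcol, sum_range_column (Nat.find_min' hex (hsupp N le_rfl))] at hsum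
  rw [hcol, hsum]

lemma add_column_mem_shapes (hf : f ∈ shapes N m) (hj : j ≤ N) :
    f + column j ∈ shapes N (m + j) := by
  obtain ⟨hanti, hsupp, hsum⟩ := mem_shapes.1 hf
  refine mem_shapes.2 ⟨hanti.add (antitone_column j), fun i hi => ?_, ?_⟩
  · simp only [Pi.add_apply, hsupp i hi, column]
    split_ifs <;> omega
  · simp only [Pi.add_apply, sum_add_distrib, hsum, sum_range_column hj]

lemma sub_column_mem_shapes (hf : f ∈ shapes N m) (hj : 1 ≤ j) (hcol : f j < f (j - 1)) :
    f - column j ∈ shapes N (m - j) := by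
  obtain ⟨hanti, hsupp, hsum⟩ := mem_shapes.1 hf
  have hjN : j ≤ N := by
    by_contra h
    rw [hsupp (j - 1) (by omega)] at hcol
    omega
  refine mem_shapes.2 ⟨fun a b hab => ?_, fun i hi => by simp [hsupp i hi], ?_⟩
  · have hab' := hanti hab
    simp only [Pi.sub_apply, column]
    split_ifs with hb ha
    · omega
    · omega
    · have := hanti (show j ≤ b by omega)
      have := hanti (show a ≤ j - 1 by omega)
      omega
    · omega
  · have hle := column_le_of_antitone hanti (j := j) (by omega)
    have := congrArg (fun g => ∑ i ∈ range N, g i) (tsub_add_cancel_of_le hle)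
    simp only [Pi.add_apply, sum_add_distrib, sum_range_column hjN, hsum] at this
    omega

lemma exists_add_column_iff (hmN : m ≤ N) (hj : j ∈ Ico 1 m) :
    (∃ g ∈ shapes N (m - j), g + column j = f) ↔ f ∈ shapes N m ∧ 2 ≤ f 0 ∧ f j < f (j - 1) := by
  obtain ⟨hj1, hjm⟩ := mem_Ico.1 hj
  constructor
  · rintro ⟨g, hg, rfl⟩
    have hg0 := pos_of_mem_shapes hg (by omega)
    have hgj := (mem_shapes.1 hg).1 (show j - 1 ≤ j by omega)
    refine ⟨?_, ?_, ?_⟩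
    · simpa [Nat.sub_add_cancel hjm.le] using add_column_mem_shapes hg (show j ≤ N by omega)
    · simp only [Pi.add_apply, column, if_pos (show 0 < j by omega)]
      omega
    · simp only [Pi.add_apply, column, lt_irrefl, if_false, if_pos (show j - 1 < j by omega)]
      omega
  · rintro ⟨hf, -, hcol⟩
    exact ⟨f - column j, sub_column_mem_shapes hf hj1 hcol,
      tsub_add_cancel_of_le (column_le_of_antitone (mem_shapes.1 hf).1 (by omega))⟩

lemma sum_sum_sub_column (hmN : m ≤ N) (F : ℕ → (ℕ → ℕ) → ℚ) :
    ∑ f ∈ (shapes N m).filter (fun f => 2 ≤ f 0),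
        ∑ j ∈ (Ico 1 m).filter (fun j => f j < f (j - 1)), F j (f - column j) =
      ∑ j ∈ Ico 1 m, ∑ g ∈ shapes N (m - j), F j g := by
  have hmap : ∀ j, ∑ g ∈ shapes N (m - j), F j g =
      ∑ f ∈ (shapes N (m - j)).map (addRightEmbedding (column j)), F j (f - column j) := by
    intro j
    simp [add_tsub_cancel_right]
  simp_rw [hmap]
  refine sum_comm' fun f j => ?_
  simp only [mem_filter, mem_map, addRightEmbedding_apply]
  constructor
  · rintro ⟨⟨hf, h2⟩, hj, hcol⟩
    exact ⟨(exists_add_column_iff hmN hj).2 ⟨hf, h2, hcol⟩, hj⟩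
  · rintro ⟨hex, hj⟩
    obtain ⟨hf, h2, hcol⟩ := (exists_add_column_iff hmN hj).1 hex
    exact ⟨⟨hf, h2⟩, hj, hcol⟩

end Shapes

def chainBinom (N : ℕ) (f : ℕ → ℕ) : ℕ := ∏ i ∈ range N, (f i).choose (f (i + 1))

lemma chainBinom_succ (N : ℕ) (f : ℕ → ℕ) :
    chainBinom (N + 1) f = chainBinom N (fun i => f (i + 1)) * (f 0).choose (f 1) :=
  prod_range_succ' _ _

lemma chainBinom_column (N j : ℕ) : chainBinom N (column j) = 1 :=
  prod_eq_one fun i _ => by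
    simp only [column]
    split_ifs <;> first | rfl | omega

lemma mul_chainBinom_sub_column {N j : ℕ} {f : ℕ → ℕ} (hf : Antitone f) (hj : j < N)
    (hcol : f (j + 1) < f j) :
    f 0 * chainBinom N (f - column (j + 1)) = (f j - f (j + 1)) * chainBinom N f := by
  induction N generalizing f j with
  | zero => omega
  | succ N ih =>
    have hf0 : 1 ≤ f 0 := by have := hf (Nat.zero_le j); omega
    rw [chainBinom_succ, chainBinom_succ]
    rcases j with _ | j
    · have hshift : (fun i => (f - column 1) (i + 1)) = fun i => f (i + 1) := by
        funext i
        simp [column]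
      have hchoose := Nat.choose_mul_succ_eq (f 0 - 1) (f 1)
      rw [Nat.sub_add_cancel hf0] at hchoose
      have h0 : (f - column 1) 0 = f 0 - 1 := by simp [column]
      have h1 : (f - column 1) 1 = f 1 := by simp [column]
      rw [hshift, h0, h1]
      calc f 0 * (chainBinom N (fun i => f (i + 1)) * (f 0 - 1).choose (f 1))
          = chainBinom N (fun i => f (i + 1)) * ((f 0 - 1).choose (f 1) * f 0) := by ring
        _ = chainBinom N (fun i => f (i + 1)) * ((f 0).choose (f 1) * (f 0 - f 1)) := by
          rw [hchoose]
        _ = _ := by ring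
    · have hf1 : 1 ≤ f 1 := by have := hf (show 1 ≤ j + 1 by omega); omega
      have hshift : (fun i => (f - column (j + 2)) (i + 1)) =
          (fun i => f (i + 1)) - column (j + 1) := by
        funext i
        simp [column]
      have hchoose := Nat.add_one_mul_choose_eq (f 0 - 1) (f 1 - 1)
      rw [Nat.sub_add_cancel hf0, Nat.sub_add_cancel hf1] at hchoose
      have hih := ih (f := fun i => f (i + 1)) (j := j) (fun a b h => hf (by omega))
        (by omega) hcol
      have h0 : (f - column (j + 2)) 0 = f 0 - 1 := by simp [column]
      have h1 : (f - column (j + 2)) 1 = f 1 - 1 := by simp [column]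
      rw [hshift, h0, h1]
      calc f 0 * (chainBinom N ((fun i => f (i + 1)) - column (j + 1)) *
            (f 0 - 1).choose (f 1 - 1))
          = f 0 * (f 0 - 1).choose (f 1 - 1) *
              chainBinom N ((fun i => f (i + 1)) - column (j + 1)) := by ring
        _ = (f 0).choose (f 1) * (f 1 * chainBinom N ((fun i => f (i + 1)) - column (j + 1))) := by
          rw [hchoose]; ring
        _ = _ := by rw [hih]; ring

def factor (i : ℕ) : ℚ := ((|2 * ((i : ℤ) + 1) - 3| : ℤ) : ℚ) / ((i : ℚ) + 1)

def columnWeight (j : ℕ) : ℚ := ∏ i ∈ range j, factor i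

lemma columnWeight_one : columnWeight 1 = 1 := by
  norm_num [columnWeight, factor]

lemma succ_mul_columnWeight_succ {j : ℕ} (hj : 1 ≤ j) :
    ((j : ℚ) + 1) * columnWeight (j + 1) = (2 * j - 1) * columnWeight j := by
  have habs : |2 * ((j : ℤ) + 1) - 3| = 2 * j - 1 := by
    rw [abs_of_nonneg (by omega)]
    ring
  rw [columnWeight, prod_range_succ, ← columnWeight, factor, habs]
  push_cast
  field_simp

def factorProd (N : ℕ) (f : ℕ → ℕ) : ℚ := ∏ i ∈ range N, factor i ^ f i

lemma factorProd_add (N : ℕ) (f g : ℕ → ℕ) :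
    factorProd N (f + g) = factorProd N f * factorProd N g := by
  simp only [factorProd, Pi.add_apply, pow_add, prod_mul_distrib]

lemma factorProd_column {N j : ℕ} (hj : j ≤ N) : factorProd N (column j) = columnWeight j := by
  simp only [factorProd, column, pow_ite, pow_one, pow_zero]
  rw [← prod_filter, range_filter_lt hj, columnWeight]

lemma columnWeight_mul_factorProd_sub_column {N j : ℕ} {f : ℕ → ℕ} (hj : j ≤ N)
    (hle : column j ≤ f) : columnWeight j * factorProd N (f - column j) = factorProd N f := by
  rw [← factorProd_column hj, ← factorProd_add, add_tsub_cancel_of_le hle]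

def weight (N m : ℕ) (f : ℕ → ℕ) : ℚ := m / f 0 * chainBinom N f * factorProd N f

def partitionSum (N m : ℕ) : ℚ := ∑ f ∈ shapes N m, weight N m f

lemma weight_column {N m : ℕ} (hm : 1 ≤ m) (hmN : m ≤ N) :
    weight N m (column m) = m * columnWeight m := by
  simp [weight, chainBinom_column, factorProd_column hmN, column, show 0 < m by omega]

lemma columnWeight_mul_weight_sub_column {N j m : ℕ} {f : ℕ → ℕ} (hf : Antitone f)
    (hj : 1 ≤ j) (hjN : j ≤ N) (hcol : f j < f (j - 1)) (h2 : 2 ≤ f 0) :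
    columnWeight j * weight N m (f - column j) =
      m * ((f (j - 1) : ℚ) - f j) * (chainBinom N f * factorProd N f) / (f 0 * (f 0 - 1)) := by
  obtain ⟨i, rfl⟩ : ∃ i, j = i + 1 := ⟨j - 1, by omega⟩
  rw [Nat.add_sub_cancel] at hcol ⊢
  have hchain : (f 0 : ℚ) * chainBinom N (f - column (i + 1)) =
      ((f i : ℚ) - f (i + 1)) * chainBinom N f := by
    rw [← Nat.cast_sub hcol.le]
    exact_mod_cast mul_chainBinom_sub_column hf (by omega) hcol
  have hprod := columnWeight_mul_factorProd_sub_column (N := N) hjN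
    (column_le_of_antitone hf (by rw [Nat.add_sub_cancel]; omega))
  have h0 : (((f - column (i + 1)) 0 : ℕ) : ℚ) = f 0 - 1 := by
    simp [column, Nat.cast_sub (show 1 ≤ f 0 by omega)]
  have hf0 : (f 0 : ℚ) - 1 ≠ 0 := by
    have : (2 : ℚ) ≤ f 0 := by exact_mod_cast h2
    linarith
  have hf0' : (f 0 : ℚ) ≠ 0 := by positivity
  rw [weight, h0]
  field_simp
  linear_combination (m : ℚ) * factorProd N (f - column (i + 1)) * columnWeight (i + 1) * hchain
    + (m : ℚ) * ((f i : ℚ) - f (i + 1)) * chainBinom N f * hprod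

lemma sum_range_sub_mul_sub (g : ℕ → ℚ) (K : ℕ) :
    ∑ k ∈ range K, ((K : ℚ) - k) * (g k - g (k + 1)) =
      (K + 1) * g 0 - ∑ i ∈ range (K + 1), g i := by
  induction K with
  | zero => simp
  | succ K ih =>
    calc ∑ k ∈ range (K + 1), (((K + 1 : ℕ) : ℚ) - k) * (g k - g (k + 1))
        = ∑ k ∈ range (K + 1), ((K : ℚ) - k) * (g k - g (k + 1)) +
            ∑ k ∈ range (K + 1), (g k - g (k + 1)) := by
          rw [← sum_add_distrib]
          push_cast
          exact sum_congr rfl fun k _ => by ring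
      _ = _ := by
          rw [sum_range_succ (fun k => ((K : ℚ) - k) * (g k - g (k + 1))), ih, sum_range_sub',
            sum_range_succ _ (K + 1)]
          push_cast
          ring

lemma sum_Ico_sub_mul_sub_of_mem_shapes {N m : ℕ} {f : ℕ → ℕ} (hf : f ∈ shapes N m)
    (hm : 1 ≤ m) (hmN : m ≤ N) :
    ∑ j ∈ Ico 1 m, ((m : ℚ) - j) * ((f (j - 1) : ℚ) - f j) = m * (f 0 - 1) := by
  obtain ⟨M, rfl⟩ : ∃ M, m = M + 1 := ⟨m - 1, by omega⟩
  have hsum : ∑ i ∈ range (M + 1), (f i : ℚ) = M + 1 := by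
    exact_mod_cast sum_range_self_of_mem_shapes hf hmN
  rw [sum_Ico_eq_sum_range, Nat.add_sub_cancel]
  calc ∑ k ∈ range M, (((M + 1 : ℕ) : ℚ) - (1 + k : ℕ)) * ((f (1 + k - 1) : ℚ) - f (1 + k))
      = ∑ k ∈ range M, ((M : ℚ) - k) * ((f k : ℚ) - f (k + 1)) :=
        sum_congr rfl fun k _ => by
          rw [Nat.add_sub_cancel_left, add_comm 1 k]
          push_cast
          ring
    _ = _ := by
        rw [sum_range_sub_mul_sub (fun i => (f i : ℚ)), hsum]
        push_cast
        ring

lemma sum_columnWeight_mul_weight_sub_column {N m : ℕ} {f : ℕ → ℕ} (hf : f ∈ shapes N m)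
    (hmN : m ≤ N) (h2 : 2 ≤ f 0) :
    ∑ j ∈ (Ico 1 m).filter (fun j => f j < f (j - 1)),
      columnWeight j * weight N (m - j) (f - column j) = weight N m f := by
  have hanti := (mem_shapes.1 hf).1
  have hm : 1 ≤ m := by
    have := sum_range_le_of_mem_shapes hf 1
    rw [sum_range_one] at this
    omega
  set K : ℚ := chainBinom N f * factorProd N f / (f 0 * (f 0 - 1))
  calc _ = ∑ j ∈ (Ico 1 m).filter (fun j => f j < f (j - 1)),
          ((m : ℚ) - j) * ((f (j - 1) : ℚ) - f j) * K :=
        sum_congr rfl fun j hj => by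
          obtain ⟨hj, hcol⟩ := mem_filter.1 hj
          obtain ⟨hj1, hjm⟩ := mem_Ico.1 hj
          rw [columnWeight_mul_weight_sub_column hanti hj1 (by omega) hcol h2,
            Nat.cast_sub hjm.le]
          ring
    _ = ∑ j ∈ Ico 1 m, ((m : ℚ) - j) * ((f (j - 1) : ℚ) - f j) * K :=
        sum_filter_of_ne fun j hj hne => by
          by_contra hcol
          have := hanti (Nat.sub_le j 1)
          rw [show f j = f (j - 1) by omega, sub_self, mul_zero, zero_mul] at hne
          exact hne rfl
    _ = m * (f 0 - 1) * K := by rw [← sum_mul, sum_Ico_sub_mul_sub_of_mem_shapes hf hm hmN]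
    _ = weight N m f := by
        have hf0 : (f 0 : ℚ) - 1 ≠ 0 := by
          have : (2 : ℚ) ≤ f 0 := by exact_mod_cast h2
          linarith
        have hf0' : (f 0 : ℚ) ≠ 0 := by positivity
        simp only [K, weight]
        field_simp

lemma partitionSum_eq {N m : ℕ} (hm : 1 ≤ m) (hmN : m ≤ N) :
    partitionSum N m =
      m * columnWeight m + ∑ j ∈ Ico 1 m, columnWeight j * partitionSum N (m - j) := by
  have hsingle : (shapes N m).filter (fun f => ¬ 2 ≤ f 0) = {column m} := by
    ext f
    simp only [mem_filter, mem_singleton]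
    constructor
    · rintro ⟨hf, h⟩
      exact eq_column_of_mem_shapes hf (by omega)
    · rintro rfl
      refine ⟨column_mem_shapes hmN, ?_⟩
      simp only [column]
      split_ifs <;> omega
  rw [partitionSum, ← sum_filter_not_add_sum_filter _ (fun f => 2 ≤ f 0), hsingle, sum_singleton,
    weight_column hm hmN, ← sum_congr rfl fun f hf =>
      sum_columnWeight_mul_weight_sub_column (mem_filter.1 hf).1 hmN (mem_filter.1 hf).2,
    sum_sum_sub_column hmN fun j g => columnWeight j * weight N (m - j) g]
  simp_rw [partitionSum, mul_sum]

lemma mul_columnWeight_add_sum {m : ℕ} (hm : 1 ≤ m) :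
    m * columnWeight m + ∑ j ∈ Ico 1 m, columnWeight j * 2 ^ (m - j - 1) = (2 : ℚ) ^ (m - 1) := by
  induction m, hm using Nat.le_induction with
  | base => simp [columnWeight_one]
  | succ m hm ih =>
    have hdouble : ∑ j ∈ Ico 1 m, columnWeight j * (2 : ℚ) ^ (m + 1 - j - 1) =
        2 * ∑ j ∈ Ico 1 m, columnWeight j * 2 ^ (m - j - 1) := by
      rw [mul_sum]
      refine sum_congr rfl fun j hj => ?_
      rw [show m + 1 - j - 1 = m - j - 1 + 1 by have := (mem_Ico.1 hj).2; omega, pow_succ]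
      ring
    have hpow : (2 : ℚ) ^ (m + 1 - 1) = 2 * 2 ^ (m - 1) := by
      rw [← pow_succ']
      congr 1
      omega
    rw [sum_Ico_succ_top hm, hdouble, show m + 1 - m - 1 = 0 by omega, pow_zero, hpow, ← ih]
    push_cast
    linear_combination succ_mul_columnWeight_succ hm

lemma partitionSum_eq_two_pow {N m : ℕ} (hm : 1 ≤ m) (hmN : m ≤ N) :
    partitionSum N m = 2 ^ (m - 1) := by
  induction m using Nat.strong_induction_on with
  | _ m ih =>
    rw [partitionSum_eq hm hmN, ← mul_columnWeight_add_sum hm]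
    congr 1
    refine sum_congr rfl fun j hj => ?_
    obtain ⟨hj1, hjm⟩ := mem_Ico.1 hj
    rw [ih (m - j) (by omega) (by omega) (by omega)]

lemma chainBinom_zeroExtend {N : ℕ} (t : Fin N → ℕ) :
    chainBinom N (zeroExtend t) = binomProd N t := by
  rw [chainBinom, binomProd, ← Fin.prod_univ_eq_prod_range (fun i => (zeroExtend t i).choose
    (zeroExtend t (i + 1)))]
  exact prod_congr rfl fun i _ => by rw [zeroExtend_coe]; rfl

lemma factorProd_zeroExtend {N : ℕ} (t : Fin N → ℕ) :
    factorProd N (zeroExtend t) = ∏ i : Fin N, factor i ^ t i := by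
  rw [factorProd, ← Fin.prod_univ_eq_prod_range (fun i => factor i ^ zeroExtend t i)]
  exact prod_congr rfl fun i _ => by rw [zeroExtend_coe]

theorem stmt9 (n : ℕ) (hn : 0 < n) :
    ∑ t ∈ partitionTuples n,
      (binomProd n t : ℚ) * ((n : ℚ) / (t ⟨0, hn⟩ : ℚ)) *
        ∏ i : Fin n, (((|2 * ((i : ℕ) + 1) - 3| : ℤ) : ℚ) / ((i : ℕ) + 1 : ℚ)) ^ (t i)
      = 2 ^ (n - 1) := by
  rw [← partitionSum_eq_two_pow hn le_rfl, partitionSum, shapes, sum_map]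
  refine sum_congr rfl fun t _ => ?_
  rw [Function.Embedding.coeFn_mk, weight, chainBinom_zeroExtend, factorProd_zeroExtend,
    ← zeroExtend_coe t ⟨0, hn⟩]
  simp only [factor]
  ring
end

section
/- For every integer n > 0, the sum over all weakly decreasing tuples (λ₁, λ₂, ..., λₙ) of nonnegative integers with λ₁ + λ₂ + ... + λₙ = n of the rational quantity C(λ₁,λ₂)·C(λ₂,λ₃)···C(λₙ,0) · ∏_{i=1}^{n} (|2i−3|/i)^{λᵢ} equals (2n−1)!!/n!. -/
open Finset

namespace Stmt11Aux

/-- The weight `x_{i+1} = |2(i+1)-3|/(i+1)`. -/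
noncomputable def X (i : ℕ) : ℚ := ((|2 * ((i : ℤ) + 1) - 3| : ℤ) : ℚ) / ((i : ℚ) + 1)

lemma X_zero : X 0 = 1 := by norm_num [X]

lemma X_succ (i : ℕ) : X (i + 1) = (2 * (i : ℚ) + 1) / ((i : ℚ) + 2) := by
  have h : |2 * ((i : ℤ) + 1 + 1) - 3| = 2 * (i : ℤ) + 1 := by
    rw [abs_of_nonneg] <;> omega
  simp only [X, Nat.cast_add, Nat.cast_one]
  rw [h]
  push_cast
  ring_nf

/-- Column weight `c k = x₁ x₂ ⋯ x_k`. -/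
noncomputable def c (k : ℕ) : ℚ := ∏ i ∈ range k, X i

lemma cat_rec (k : ℕ) : (k + 2) * catalan (k + 1) = 2 * (2 * k + 1) * catalan k := by
  have h1 := Nat.succ_mul_centralBinom_succ k
  have h2 := succ_mul_catalan_eq_centralBinom k
  have h3 := succ_mul_catalan_eq_centralBinom (k + 1)
  nlinarith [h1, h2, h3]

lemma c_succ (k : ℕ) : c (k + 1) = (catalan k : ℚ) / 2 ^ k := by
  induction k with
  | zero => simp [c, X_zero]
  | succ k ih =>
    have : c (k + 1 + 1) = c (k + 1) * X (k + 1) := by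
      rw [c, prod_range_succ]; rfl
    rw [this, ih, X_succ]
    have hrec : ((k : ℚ) + 2) * catalan (k + 1) = 2 * (2 * k + 1) * catalan k := by
      have := cat_rec k
      exact_mod_cast congrArg (fun x : ℕ => (x : ℚ)) this
    have h2 : (2 : ℚ) ^ (k + 1) = 2 ^ k * 2 := by ring
    field_simp
    ring_nf
    ring_nf at hrec
    nlinarith [hrec, pow_pos (show (0:ℚ) < 2 by norm_num) k]

/-- `g N = centralBinom N / 2^N = (2N-1)!!/N!`. -/
noncomputable def g (N : ℕ) : ℚ := (Nat.centralBinom N : ℚ) / 2 ^ N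

lemma g_zero : g 0 = 1 := by simp [g, Nat.centralBinom]

/-- Key Catalan convolution in ℕ. -/
lemma cat_conv (n : ℕ) :
    2 * ∑ j ∈ range (n + 1), catalan j * ((n - j + 1) * catalan (n - j))
      = (n + 2) * catalan (n + 1) := by
  have hrefl : ∑ j ∈ range (n + 1), catalan j * ((n - j + 1) * catalan (n - j))
      = ∑ j ∈ range (n + 1), catalan (n - j) * ((j + 1) * catalan j) := by
    rw [← Finset.sum_range_reflect]
    apply Finset.sum_congr rfl
    intro j hj
    simp only [Finset.mem_range] at hj
    have h1 : n - (n - j) = j := by omega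
    have h2 : n + 1 - 1 - j = n - j := by omega
    rw [h2, h1]
  have hsum : 2 * ∑ j ∈ range (n + 1), catalan j * ((n - j + 1) * catalan (n - j))
      = ∑ j ∈ range (n + 1), (n + 2) * (catalan j * catalan (n - j)) := by
    rw [two_mul]
    nth_rewrite 2 [hrefl]
    rw [← Finset.sum_add_distrib]
    apply Finset.sum_congr rfl
    intro j hj
    simp only [Finset.mem_range] at hj
    have h : n - j + 1 + (j + 1) = n + 2 := by omega
    rw [← h]; ring
  rw [hsum, ← Finset.mul_sum]
  congr 1
  rw [catalan_succ]
  rw [Finset.sum_range fun i => catalan i * catalan (n - i)]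

/-- The rational convolution identity. -/
lemma g_conv (N : ℕ) (hN : 0 < N) :
    g N = ∑ j ∈ range N, c (j + 1) * g (N - 1 - j) := by
  obtain ⟨n, rfl⟩ : ∃ n, N = n + 1 := ⟨N - 1, by omega⟩
  have hterm : ∀ j ∈ range (n + 1),
      c (j + 1) * g (n + 1 - 1 - j)
        = ((catalan j * ((n - j + 1) * catalan (n - j)) : ℕ) : ℚ) / (2 ^ n : ℚ) := by
    intro j hj
    simp only [mem_range] at hj
    have h1 : n + 1 - 1 - j = n - j := by omega
    have h2 : Nat.centralBinom (n - j) = (n - j + 1) * catalan (n - j) :=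
      (succ_mul_catalan_eq_centralBinom (n - j)).symm
    have h3 : (2 : ℚ) ^ j * 2 ^ (n - j) = 2 ^ n := by
      rw [← pow_add]; congr 1; omega
    rw [h1, c_succ, g, h2, div_mul_div_comm, h3]
    push_cast
    ring
  rw [Finset.sum_congr rfl hterm, ← Finset.sum_div, g]
  have h2 : Nat.centralBinom (n + 1) = (n + 2) * catalan (n + 1) :=
    (succ_mul_catalan_eq_centralBinom (n + 1)).symm
  rw [h2, ← cat_conv n]
  push_cast
  rw [pow_succ]
  field_simp

/-- Rational multinomial coefficient `(∑ m)! / ∏ (m i)!`. -/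
noncomputable def M {s : ℕ} (m : Fin s → ℕ) : ℚ :=
  ((∑ i, m i).factorial : ℚ) / ∏ i, ((m i).factorial : ℚ)

/-- Vectors `m` with `∑ (i+1) mᵢ = N`. -/
def mSet (s N : ℕ) : Finset (Fin s → ℕ) :=
  (Fintype.piFinset fun _ : Fin s => Finset.range (N + 1)).filter
    fun m => ∑ i : Fin s, ((i : ℕ) + 1) * m i = N

noncomputable def A (s N : ℕ) : ℚ :=
  ∑ m ∈ mSet s N, M m * ∏ i : Fin s, c ((i : ℕ) + 1) ^ m i

lemma mem_mSet {s N : ℕ} (m : Fin s → ℕ) :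
    m ∈ mSet s N ↔ ∑ i : Fin s, ((i : ℕ) + 1) * m i = N := by
  constructor
  · intro h; exact (Finset.mem_filter.mp h).2
  · intro h
    refine Finset.mem_filter.mpr ⟨Fintype.mem_piFinset.mpr fun i => ?_, h⟩
    rw [Finset.mem_range]
    have h1 : ((i : ℕ) + 1) * m i ≤ ∑ k : Fin s, ((k : ℕ) + 1) * m k :=
      Finset.single_le_sum (f := fun k : Fin s => ((k : ℕ) + 1) * m k)
        (fun _ _ => Nat.zero_le _) (Finset.mem_univ i)
    have h2 : m i ≤ ((i : ℕ) + 1) * m i := Nat.le_mul_of_pos_left _ (Nat.succ_pos _)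
    omega

lemma prod_factorial_ne_zero {s : ℕ} (m : Fin s → ℕ) :
    (∏ i, ((m i).factorial : ℚ)) ≠ 0 :=
  Finset.prod_ne_zero_iff.mpr fun i _ => Nat.cast_ne_zero.mpr (Nat.factorial_ne_zero _)

lemma cast_factorial_pred (a : ℕ) (ha : 0 < a) :
    ((a - 1).factorial : ℚ) = (a.factorial : ℚ) / a := by
  obtain ⟨b, rfl⟩ : ∃ b, a = b + 1 := ⟨a - 1, by omega⟩
  rw [Nat.add_sub_cancel, Nat.factorial_succ]
  push_cast
  rw [mul_comm, mul_div_assoc, div_self (by positivity), mul_one]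

lemma M_update {s : ℕ} (m : Fin s → ℕ) (j : Fin s) (hj : 0 < m j) :
    M (Function.update m j (m j - 1)) = M m * (m j) / (∑ i, m i) := by
  have hsum : 0 < ∑ i, m i :=
    lt_of_lt_of_le hj (Finset.single_le_sum (fun _ _ => Nat.zero_le _) (Finset.mem_univ j))
  have hs : ∑ i, Function.update m j (m j - 1) i = (∑ i, m i) - 1 := by
    rw [Finset.sum_update_of_mem (Finset.mem_univ j)]
    have h1 : ∑ i, m i = m j + ∑ i ∈ univ \ {j}, m i := by
      rw [← Finset.sum_update_of_mem (Finset.mem_univ j)]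
      simp [Function.update_eq_self]
    omega
  have hcomp : (fun i => ((Function.update m j (m j - 1) i).factorial : ℚ))
      = Function.update (fun i => ((m i).factorial : ℚ)) j (((m j - 1).factorial : ℚ)) := by
    funext i
    by_cases hij : i = j
    · subst hij; simp
    · simp [Function.update_of_ne hij]
  have hprod : ∏ i, ((Function.update m j (m j - 1) i).factorial : ℚ)
      = (∏ i, ((m i).factorial : ℚ)) / (m j) := by
    rw [show (∏ i, ((Function.update m j (m j - 1) i).factorial : ℚ))
        = ∏ i, Function.update (fun i => ((m i).factorial : ℚ)) j (((m j - 1).factorial : ℚ)) i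
      from by rw [← hcomp]]
    rw [Finset.prod_update_of_mem (Finset.mem_univ j)]
    have h1 : ∏ i, ((m i).factorial : ℚ) = ((m j).factorial : ℚ) *
        ∏ i ∈ univ \ {j}, ((m i).factorial : ℚ) := by
      rw [← Finset.prod_update_of_mem (Finset.mem_univ j)]
      simp [Function.update_eq_self]
    rw [h1, cast_factorial_pred _ hj]
    have h0 : ((m j : ℚ)) ≠ 0 := Nat.cast_ne_zero.mpr hj.ne'
    field_simp
  rw [M, M, hs, hprod, cast_factorial_pred _ hsum]
  have h0 : ((m j : ℚ)) ≠ 0 := Nat.cast_ne_zero.mpr hj.ne'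
  have h1 : ((∑ i, m i : ℕ) : ℚ) ≠ 0 := Nat.cast_ne_zero.mpr hsum.ne'
  have h2 := prod_factorial_ne_zero m
  field_simp

/-- Pascal recurrence for the multinomial coefficient. -/
lemma M_pascal {s : ℕ} (m : Fin s → ℕ) (h : 0 < ∑ i, m i) :
    M m = ∑ j : Fin s, if 0 < m j then M (Function.update m j (m j - 1)) else 0 := by
  have : ∀ j : Fin s, (if 0 < m j then M (Function.update m j (m j - 1)) else 0)
      = M m * (m j) / (∑ i, m i) := by
    intro j
    by_cases hj : 0 < m j
    · rw [if_pos hj, M_update m j hj]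
    · rw [if_neg hj]
      have : m j = 0 := by omega
      rw [this]
      simp
  rw [Finset.sum_congr rfl fun j _ => this j]
  rw [← Finset.sum_div]
  rw [← Finset.mul_sum]
  have h1 : ((∑ i, m i : ℕ) : ℚ) ≠ 0 := Nat.cast_ne_zero.mpr h.ne'
  rw [← Nat.cast_sum]
  rw [mul_div_assoc, div_self h1, mul_one]

open Function

lemma apply_update_sum {s : ℕ} (f : Fin s → ℕ) (g : Fin s → ℕ → ℕ) (j : Fin s) (v : ℕ) :
    ∑ i, g i (Function.update f j v i) = g j v + ∑ i ∈ univ \ {j}, g i (f i) := by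
  have h : ∀ i, g i (Function.update f j v i)
      = Function.update (fun k => g k (f k)) j (g j v) i :=
    fun i => Function.apply_update (fun k => g k) f j v i
  rw [Finset.sum_congr rfl fun i _ => h i, Finset.sum_update_of_mem (Finset.mem_univ j)]

lemma apply_update_prod {s : ℕ} (f : Fin s → ℕ) (g : Fin s → ℕ → ℚ) (j : Fin s) (v : ℕ) :
    ∏ i, g i (Function.update f j v i) = g j v * ∏ i ∈ univ \ {j}, g i (f i) := by
  have h : ∀ i, g i (Function.update f j v i)
      = Function.update (fun k => g k (f k)) j (g j v) i :=
    fun i => Function.apply_update (fun k => g k) f j v i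
  rw [Finset.prod_congr rfl fun i _ => h i, Finset.prod_update_of_mem (Finset.mem_univ j)]

lemma sum_split {s : ℕ} (g : Fin s → ℕ) (j : Fin s) :
    ∑ i, g i = g j + ∑ i ∈ univ \ {j}, g i := by
  rw [Finset.sum_eq_sum_sdiff_singleton_add (Finset.mem_univ j)]; ring

lemma prod_split {s : ℕ} (g : Fin s → ℚ) (j : Fin s) :
    ∏ i, g i = g j * ∏ i ∈ univ \ {j}, g i := by
  rw [Finset.prod_eq_prod_diff_singleton_mul (Finset.mem_univ j)]; ring

lemma A_rec (s N : ℕ) (hN : 0 < N) :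
    A s N = ∑ j : Fin s,
      (if (j : ℕ) + 1 ≤ N then c ((j : ℕ) + 1) * A s (N - 1 - (j : ℕ)) else 0) := by
  have hpos : ∀ m ∈ mSet s N, 0 < ∑ i, m i := by
    intro m hm
    rw [mem_mSet] at hm
    by_contra h
    push_neg at h
    interval_cases hsum : (∑ i, m i)
    · have : ∀ i, m i = 0 := by
        intro i
        have := Finset.sum_eq_zero_iff.mp hsum
        exact this i (Finset.mem_univ i)
      rw [Finset.sum_eq_zero (fun i _ => by rw [this i, mul_zero])] at hm
      omega
  calc A s N = ∑ m ∈ mSet s N, (∑ j : Fin s,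
        if 0 < m j then M (Function.update m j (m j - 1)) else 0) *
          ∏ i : Fin s, c ((i : ℕ) + 1) ^ m i := by
        refine Finset.sum_congr rfl fun m hm => ?_
        rw [← M_pascal m (hpos m hm)]
    _ = ∑ j : Fin s, ∑ m ∈ mSet s N,
        (if 0 < m j then M (Function.update m j (m j - 1)) *
          ∏ i : Fin s, c ((i : ℕ) + 1) ^ m i else 0) := by
        rw [Finset.sum_comm]
        refine Finset.sum_congr rfl fun m _ => ?_
        rw [Finset.sum_mul]
        refine Finset.sum_congr rfl fun j _ => ?_
        split <;> simp
    _ = ∑ j : Fin s,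
        (if (j : ℕ) + 1 ≤ N then c ((j : ℕ) + 1) * A s (N - 1 - (j : ℕ)) else 0) := by
        refine Finset.sum_congr rfl fun j _ => ?_
        rw [← Finset.sum_filter]
        by_cases hj : (j : ℕ) + 1 ≤ N
        · rw [if_pos hj]
          rw [A, Finset.mul_sum]
          refine Finset.sum_nbij' (fun m => Function.update m j (m j - 1))
            (fun m => Function.update m j (m j + 1)) ?_ ?_ ?_ ?_ ?_
          · intro m hm
            simp only [Finset.mem_filter, mem_mSet] at hm ⊢
            obtain ⟨hm1, hm2⟩ := hm
            rw [apply_update_sum m (fun i v => ((i : ℕ) + 1) * v) j (m j - 1)]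
            rw [sum_split (fun i => ((i : ℕ) + 1) * m i) j] at hm1
            have hmj : 1 ≤ m j := hm2
            have : ((j : ℕ) + 1) * (m j - 1) + (j:ℕ) + 1 = ((j : ℕ) + 1) * m j := by
              obtain ⟨k, hk⟩ : ∃ k, m j = k + 1 := ⟨m j - 1, by omega⟩
              rw [hk, Nat.add_sub_cancel]; ring
            omega
          · intro m hm
            rw [mem_mSet] at hm
            simp only [Finset.mem_filter, mem_mSet]
            constructor
            · rw [apply_update_sum m (fun i v => ((i : ℕ) + 1) * v) j (m j + 1)]
              rw [sum_split (fun i => ((i : ℕ) + 1) * m i) j] at hm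
              have : ((j : ℕ) + 1) * (m j + 1) = ((j : ℕ) + 1) * m j + (j:ℕ) + 1 := by ring
              omega
            · simp [Function.update_self]
          · intro m hm
            simp only [Finset.mem_filter, mem_mSet] at hm
            funext i
            by_cases hi : i = j
            · subst hi
              simp only [Function.update_self, Function.update_idem]
              have : m i - 1 + 1 = m i := by omega
              rw [this]
            · simp [Function.update_of_ne hi]
          · intro m hm
            funext i
            by_cases hi : i = j
            · subst hi
              simp only [Function.update_self, Function.update_idem, Nat.add_sub_cancel]
            · simp [Function.update_of_ne hi]
          · intro m hm
            simp only [Finset.mem_filter, mem_mSet] at hm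
            obtain ⟨hm1, hm2⟩ := hm
            have hP := apply_update_prod m (fun i v => c ((i : ℕ) + 1) ^ v) j (m j - 1)
            have hQ := prod_split (fun i => c ((i : ℕ) + 1) ^ m i) j
            have hc : c ((j : ℕ) + 1) ^ m j
                = c ((j : ℕ) + 1) * c ((j : ℕ) + 1) ^ (m j - 1) := by
              conv_lhs => rw [show m j = (m j - 1) + 1 by omega]
              rw [pow_succ]; ring
            rw [hP, hQ, hc]
            ring
        · rw [if_neg hj]
          apply Finset.sum_eq_zero
          intro m hm
          simp only [Finset.mem_filter, mem_mSet] at hm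
          obtain ⟨hm1, hm2⟩ := hm
          exfalso
          rw [sum_split (fun i => ((i : ℕ) + 1) * m i) j] at hm1
          have : ((j : ℕ) + 1) * 1 ≤ ((j : ℕ) + 1) * m j := Nat.mul_le_mul_left _ hm2
          omega



lemma A_zero (s : ℕ) : A s 0 = 1 := by
  have hset : mSet s 0 = {fun _ => 0} := by
    ext m
    rw [mem_mSet, Finset.mem_singleton]
    constructor
    · intro h
      funext i
      have := Finset.sum_eq_zero_iff.mp h i (Finset.mem_univ i)
      rcases Nat.mul_eq_zero.mp this with h' | h'
      · omega
      · exact h'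
    · intro h
      subst h
      simp
  rw [A, hset, Finset.sum_singleton]
  simp [M]

lemma A_eq_g : ∀ N s : ℕ, N ≤ s → A s N = g N := by
  intro N
  induction N using Nat.strong_induction_on with
  | _ N ih =>
    intro s hs
    rcases Nat.eq_zero_or_pos N with hN | hN
    · subst hN; rw [A_zero, g_zero]
    · rw [A_rec s N hN, g_conv N hN]
      rw [Fin.sum_univ_eq_sum_range
        (fun j => if j + 1 ≤ N then c (j + 1) * A s (N - 1 - j) else 0) s]
      rw [← Finset.sum_subset (Finset.range_subset_range.mpr hs)
        (fun j _ hj => by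
          rw [Finset.mem_range, not_lt] at hj
          rw [if_neg (by omega)])]
      refine Finset.sum_congr rfl fun j hj => ?_
      rw [Finset.mem_range] at hj
      rw [if_pos (by omega), ih (N - 1 - j) (by omega) s (by omega)]



/-- extension of a Fin-tuple by zeros -/
def extn {n : ℕ} (t : Fin n → ℕ) : ℕ → ℕ := fun k => if h : k < n then t ⟨k, h⟩ else 0

lemma extn_coe {n : ℕ} (t : Fin n → ℕ) (i : Fin n) : extn t (i : ℕ) = t i := by
  simp [extn, i.2]

lemma extn_ge {n : ℕ} (t : Fin n → ℕ) {k : ℕ} (h : n ≤ k) : extn t k = 0 := by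
  simp [extn, Nat.not_lt.mpr h]

/-- tail sums -/
def Tf {n : ℕ} (m : Fin n → ℕ) : Fin n → ℕ := fun i => ∑ j ∈ Ico (i : ℕ) n, extn m j

lemma extn_Tf {n : ℕ} (m : Fin n → ℕ) (k : ℕ) :
    extn (Tf m) k = ∑ j ∈ Ico k n, extn m j := by
  by_cases h : k < n
  · rw [extn, dif_pos h]; rfl
  · rw [extn, dif_neg h, Finset.Ico_eq_empty (by omega), Finset.sum_empty]

lemma swap_sum (n : ℕ) (f : ℕ → ℕ) :
    ∑ i ∈ range n, ∑ j ∈ Ico i n, f j = ∑ j ∈ range n, (j + 1) * f j := by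
  have h1 : ∀ i ∈ range n, ∑ j ∈ Ico i n, f j
      = ∑ j ∈ range n, if i ≤ j then f j else 0 := by
    intro i _
    rw [← Finset.sum_filter]
    congr 1
    ext j
    simp only [Finset.mem_Ico, Finset.mem_filter, Finset.mem_range]
    omega
  rw [Finset.sum_congr rfl h1, Finset.sum_comm]
  refine Finset.sum_congr rfl fun j hj => ?_
  rw [Finset.mem_range] at hj
  rw [← Finset.sum_filter]
  have h2 : (range n).filter (fun i => i ≤ j) = range (j + 1) := by
    ext i
    simp only [Finset.mem_filter, Finset.mem_range]
    omega
  rw [h2, Finset.sum_const, Finset.card_range, smul_eq_mul]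

lemma swap_prod (n : ℕ) (G : ℕ → ℕ → ℚ) :
    ∏ i ∈ range n, ∏ j ∈ Ico i n, G i j = ∏ j ∈ range n, ∏ i ∈ range (j + 1), G i j := by
  have h1 : ∀ i ∈ range n, ∏ j ∈ Ico i n, G i j
      = ∏ j ∈ range n, if i ≤ j then G i j else 1 := by
    intro i _
    rw [← Finset.prod_filter]
    congr 1
    ext j
    simp only [Finset.mem_Ico, Finset.mem_filter, Finset.mem_range]
    omega
  rw [Finset.prod_congr rfl h1, Finset.prod_comm]
  refine Finset.prod_congr rfl fun j hj => ?_
  rw [Finset.mem_range] at hj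
  rw [← Finset.prod_filter]
  have h2 : (range n).filter (fun i => i ≤ j) = range (j + 1) := by
    ext i
    simp only [Finset.mem_filter, Finset.mem_range]
    omega
  rw [h2]

lemma sum_Tf_eq {n : ℕ} (m : Fin n → ℕ) :
    ∑ i, Tf m i = ∑ i : Fin n, ((i : ℕ) + 1) * m i := by
  rw [show (∑ i, Tf m i) = ∑ i : Fin n, ∑ j ∈ Ico (i : ℕ) n, extn m j from rfl]
  rw [Fin.sum_univ_eq_sum_range (fun k => ∑ j ∈ Ico k n, extn m j) n]
  rw [swap_sum n (extn m)]
  rw [← Fin.sum_univ_eq_sum_range (fun k => (k + 1) * extn m k) n]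
  exact Finset.sum_congr rfl fun i _ => by rw [extn_coe]

lemma tele_sub {n : ℕ} (t : Fin n → ℕ) (hdec : ∀ k, extn t (k + 1) ≤ extn t k) :
    ∀ d k, k + d = n → ∑ j ∈ Ico k n, (extn t j - extn t (j + 1)) = extn t k := by
  intro d
  induction d with
  | zero =>
    intro k hk
    rw [show k = n by omega, Finset.Ico_self, Finset.sum_empty, extn_ge t le_rfl]
  | succ d ih =>
    intro k hk
    rw [Finset.sum_eq_sum_Ico_succ_bot (by omega : k < n), ih (k + 1) (by omega)]
    have := hdec k
    omega


lemma prod_div_telescope (f : ℕ → ℚ) (hf : ∀ k, f k ≠ 0) :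
    ∀ n : ℕ, ∏ i ∈ range n, f i / f (i + 1) = f 0 / f n := by
  intro n
  induction n with
  | zero => rw [Finset.prod_range_zero, div_self (hf 0)]
  | succ n ih =>
    rw [Finset.prod_range_succ, ih, div_mul_div_comm, mul_comm (f n) (f (n + 1)),
      mul_div_mul_right _ _ (hf n)]

lemma S_zero {n : ℕ} (m : Fin n → ℕ) : ∑ j ∈ Ico 0 n, extn m j = ∑ i, m i := by
  rw [← Finset.range_eq_Ico, ← Fin.sum_univ_eq_sum_range (fun k => extn m k) n]
  exact Finset.sum_congr rfl fun i _ => extn_coe m i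

lemma binomProd_Tf {n : ℕ} (m : Fin n → ℕ) :
    (binomProd n (Tf m) : ℚ) = M m := by
  set S : ℕ → ℕ := fun k => ∑ j ∈ Ico k n, extn m j with hS
  have hsplit : ∀ k, k < n → S k = extn m k + S (k + 1) := fun k hk =>
    Finset.sum_eq_sum_Ico_succ_bot hk _
  have hSn : S n = 0 := by rw [hS]; simp
  have hdite : ∀ i : Fin n,
      (if h : (i : ℕ) + 1 < n then Tf m ⟨(i : ℕ) + 1, h⟩ else 0) = S ((i : ℕ) + 1) := by
    intro i
    by_cases h : (i : ℕ) + 1 < n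
    · rw [dif_pos h]; rfl
    · rw [dif_neg h]
      symm
      rw [hS]
      simp only
      rw [Finset.Ico_eq_empty (show ¬((i : ℕ) + 1 < n) from h), Finset.sum_empty]
  have hfac : ∀ i : Fin n,
      ((Nat.choose (Tf m i) (if h : (i : ℕ) + 1 < n then Tf m ⟨(i : ℕ) + 1, h⟩ else 0) : ℕ) : ℚ)
      = ((S (i : ℕ)).factorial : ℚ) /
          (((S ((i : ℕ) + 1)).factorial : ℚ) * ((m i).factorial : ℚ)) := by
    intro i
    rw [hdite i]
    have h1 : Tf m i = m i + S ((i : ℕ) + 1) := by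
      rw [show Tf m i = S (i : ℕ) from rfl, hsplit _ i.2, extn_coe]
    rw [h1, Nat.cast_choose ℚ (Nat.le_add_left _ _), Nat.add_sub_cancel]
    rw [show S (i : ℕ) = m i + S ((i : ℕ) + 1) from by rw [hsplit _ i.2, extn_coe]]
  have hcast : (binomProd n (Tf m) : ℚ)
      = ∏ i : Fin n, ((Nat.choose (Tf m i)
          (if h : (i : ℕ) + 1 < n then Tf m ⟨(i : ℕ) + 1, h⟩ else 0) : ℕ) : ℚ) := by
    rw [binomProd, Nat.cast_prod]
  rw [hcast, Finset.prod_congr rfl fun i _ => hfac i]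
  have hsplit2 : ∀ i : Fin n,
      ((S (i : ℕ)).factorial : ℚ) / (((S ((i : ℕ) + 1)).factorial : ℚ) * ((m i).factorial : ℚ))
      = (((S (i : ℕ)).factorial : ℚ) / ((S ((i : ℕ) + 1)).factorial : ℚ)) *
          (1 / ((m i).factorial : ℚ)) := by
    intro i
    rw [div_mul_div_comm, mul_one]
  rw [Finset.prod_congr rfl fun i _ => hsplit2 i, Finset.prod_mul_distrib]
  have htel : ∏ i : Fin n, (((S (i : ℕ)).factorial : ℚ) / ((S ((i : ℕ) + 1)).factorial : ℚ))
      = ((∑ i, m i).factorial : ℚ) := by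
    rw [Fin.prod_univ_eq_prod_range (fun k => ((S k).factorial : ℚ) / ((S (k + 1)).factorial : ℚ)) n]
    rw [prod_div_telescope (fun k => ((S k).factorial : ℚ))
      (fun k => Nat.cast_ne_zero.mpr (Nat.factorial_ne_zero _)) n]
    rw [hSn]
    rw [show S 0 = ∑ i, m i from S_zero m]
    simp
  rw [htel, M]
  rw [show ∏ i : Fin n, (1 / ((m i).factorial : ℚ)) = 1 / ∏ i, ((m i).factorial : ℚ) from by
    rw [Finset.prod_div_distrib, Finset.prod_const_one]]
  ring

lemma weight_Tf {n : ℕ} (m : Fin n → ℕ) :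
    ∏ i : Fin n, X (i : ℕ) ^ (Tf m i) = ∏ i : Fin n, c ((i : ℕ) + 1) ^ (m i) := by
  have h1 : ∀ i : Fin n, X (i : ℕ) ^ (Tf m i)
      = ∏ j ∈ Ico (i : ℕ) n, X (i : ℕ) ^ extn m j := by
    intro i
    rw [show Tf m i = ∑ j ∈ Ico (i : ℕ) n, extn m j from rfl]
    rw [Finset.prod_pow_eq_pow_sum]
  rw [Finset.prod_congr rfl fun i _ => h1 i]
  rw [Fin.prod_univ_eq_prod_range (fun k => ∏ j ∈ Ico k n, X k ^ extn m j) n]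
  rw [swap_prod n (fun i j => X i ^ extn m j)]
  rw [← Fin.prod_univ_eq_prod_range (fun j => ∏ i ∈ range (j + 1), X i ^ extn m j) n]
  refine Finset.prod_congr rfl fun j _ => ?_
  rw [extn_coe]
  rw [Finset.prod_pow]
  rfl

lemma LHS_eq_A (n : ℕ) :
    ∑ t ∈ partitionTuples n, (binomProd n t : ℚ) * ∏ i : Fin n, X (i : ℕ) ^ (t i)
      = A n n := by
  rw [A]
  symm
  refine Finset.sum_bij (fun m _ => Tf m) ?_ ?_ ?_ ?_
  · intro m hm
    rw [mem_mSet] at hm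
    rw [partitionTuples, Finset.mem_filter]
    refine ⟨?_, ?_⟩
    · rw [Finset.Nat.mem_antidiagonalTuple, sum_Tf_eq, hm]
    · intro i j hij
      apply Finset.sum_le_sum_of_subset
      exact Finset.Ico_subset_Ico hij le_rfl
  · intro m1 h1 m2 h2 heq
    have heq' : Tf m1 = Tf m2 := heq
    funext i
    have e : ∀ k, ∑ j ∈ Ico k n, extn m1 j = ∑ j ∈ Ico k n, extn m2 j := by
      intro k
      rw [← extn_Tf, ← extn_Tf, heq']
    have hi := e (i : ℕ)
    have hi1 := e ((i : ℕ) + 1)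
    rw [Finset.sum_eq_sum_Ico_succ_bot i.2, Finset.sum_eq_sum_Ico_succ_bot i.2] at hi
    rw [extn_coe, extn_coe] at hi
    omega
  · intro t ht
    rw [partitionTuples, Finset.mem_filter, Finset.Nat.mem_antidiagonalTuple] at ht
    obtain ⟨hsum, hdec⟩ := ht
    have hdec' : ∀ k, extn t (k + 1) ≤ extn t k := by
      intro k
      by_cases h1 : k + 1 < n
      · rw [extn, extn, dif_pos h1, dif_pos (show k < n by omega)]
        exact hdec ⟨k, by omega⟩ ⟨k + 1, h1⟩ (by rw [Fin.mk_le_mk]; omega)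
      · rw [extn_ge t (by omega)]
        exact Nat.zero_le _
    set D : Fin n → ℕ := fun i => t i - extn t ((i : ℕ) + 1) with hD
    have hext : ∀ j, extn D j = extn t j - extn t (j + 1) := by
      intro j
      by_cases h1 : j < n
      · simp [hD, extn, h1]
      · rw [extn_ge D (by omega), extn_ge t (by omega)]
        omega
    have hTfD : Tf D = t := by
      funext i
      calc Tf D i = ∑ j ∈ Ico (i : ℕ) n, (extn t j - extn t (j + 1)) :=
            Finset.sum_congr rfl fun j _ => hext j
        _ = extn t (i : ℕ) := tele_sub t hdec' (n - (i : ℕ)) (i : ℕ) (by omega)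
        _ = t i := extn_coe t i
    refine ⟨D, ?_, hTfD⟩
    rw [mem_mSet]
    have h2 := sum_Tf_eq D
    rw [hTfD, hsum] at h2
    omega
  · intro m hm
    rw [binomProd_Tf m, weight_Tf m]

lemma g_eq (n : ℕ) : g n = ((2 * n - 1).doubleFactorial : ℚ) / (n.factorial : ℚ) := by
  rcases Nat.eq_zero_or_pos n with h | hn
  · subst h; simp [g, Nat.centralBinom]
  have h2n : 2 * n = (2 * n - 1) + 1 := by omega
  have hdf : (2 * n).factorial = 2 ^ n * n.factorial * (2 * n - 1).doubleFactorial := by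
    calc (2 * n).factorial = ((2 * n - 1) + 1).factorial := by rw [← h2n]
      _ = ((2 * n - 1) + 1).doubleFactorial * (2 * n - 1).doubleFactorial :=
          Nat.factorial_eq_mul_doubleFactorial _
      _ = (2 * n).doubleFactorial * (2 * n - 1).doubleFactorial := by rw [← h2n]
      _ = 2 ^ n * n.factorial * (2 * n - 1).doubleFactorial := by
          rw [Nat.doubleFactorial_two_mul]
  have hcb : Nat.centralBinom n * (n.factorial * n.factorial) = (2 * n).factorial := by
    have h := Nat.choose_mul_factorial_mul_factorial (show n ≤ 2 * n by omega)
    rw [show 2 * n - n = n by omega] at h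
    rw [Nat.centralBinom, ← h]
    ring
  have key : Nat.centralBinom n * n.factorial = 2 ^ n * (2 * n - 1).doubleFactorial := by
    apply Nat.eq_of_mul_eq_mul_right (Nat.factorial_pos n)
    calc Nat.centralBinom n * n.factorial * n.factorial
        = Nat.centralBinom n * (n.factorial * n.factorial) := by ring
      _ = (2 * n).factorial := hcb
      _ = 2 ^ n * n.factorial * (2 * n - 1).doubleFactorial := hdf
      _ = 2 ^ n * (2 * n - 1).doubleFactorial * n.factorial := by ring
  rw [g, div_eq_div_iff (by positivity) (by positivity)]
  have key' : (Nat.centralBinom n : ℚ) * n.factorial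
      = 2 ^ n * (2 * n - 1).doubleFactorial := by exact_mod_cast key
  rw [key']
  ring

end Stmt11Aux

theorem stmt11 (n : ℕ) (hn : 0 < n) :
    ∑ t ∈ partitionTuples n,
      (binomProd n t : ℚ) *
        ∏ i : Fin n, (((|2 * ((i : ℕ) + 1) - 3| : ℤ) : ℚ) / ((i : ℕ) + 1 : ℚ)) ^ (t i)
      = (Nat.doubleFactorial (2 * n - 1) : ℚ) / (Nat.factorial n : ℚ) := by
  have h := Stmt11Aux.LHS_eq_A n
  rw [Stmt11Aux.A_eq_g n n le_rfl, Stmt11Aux.g_eq n] at h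
  rw [← h]
  rfl
end

section
/- For every integer n > 0, one plus the sum over all tuples (t₁, t₂, ..., tₙ) of nonnegative integers satisfying t₁ + 2t₂ + ... + n·tₙ = n of the multinomial coefficient (t₁+...+tₙ)!/(t₁!·t₂!···tₙ!) multiplied by the rational number n/(t₁+t₂+...+tₙ) equals 2^n. -/
/-!
Grouping the tuples by `k = t₁ + ⋯ + tₙ`, the multinomial theorem identifies the fibre sum of
multinomial coefficients with the coefficient of `xⁿ` in `(x + x² + ⋯ + xⁿ)ᵏ`, which agrees with
that of `(x / (1 - x))ᵏ`, namely `C(n-1, k-1)` (the number of compositions of `n` into `k` parts).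
Since `(n / k) C(n-1, k-1) = C(n, k)`, the sum is `∑_{k ≥ 1} C(n, k) = 2ⁿ - 1`.
-/

open Finset

/-- Tuples `(t₁,…,tₙ)` of nonnegative integers (each necessarily `≤ n`) with
`t₁ + 2t₂ + ⋯ + n·tₙ = n`, encoding the partitions of `n` where `i` appears `tᵢ` times. -/
def weightedTuples (n : ℕ) : Finset (Fin n → Fin (n + 1)) :=
  Finset.univ.filter fun t => ∑ i : Fin n, ((i : ℕ) + 1) * (t i : ℕ) = n

open Polynomial
open scoped PowerSeries

noncomputable def geomPoly (R : Type*) [Semiring R] (N : ℕ) : R[X] :=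
  ∑ i : Fin N, X ^ ((i : ℕ) + 1)

theorem coeff_geomPoly_pow {R : Type*} [CommSemiring R] (N k n : ℕ) :
    (geomPoly R N ^ k).coeff n =
      ∑ s ∈ (univ.piAntidiag k).filter
          (fun s : Fin N → ℕ => ∑ i : Fin N, ((i : ℕ) + 1) * s i = n),
        (Nat.multinomial univ s : R) := by
  rw [geomPoly, sum_pow_eq_sum_piAntidiag, finsetSum_coeff, sum_filter]
  refine sum_congr rfl fun s _ => ?_
  simp_rw [← pow_mul, prod_pow_eq_pow_sum, ← C_eq_natCast, coeff_C_mul_X_pow, eq_comm (a := n)]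

theorem PowerSeries.trunc_X_mul_mk_one {R : Type*} [Semiring R] (N : ℕ) :
    trunc (N + 1) (X * mk 1 : R⟦X⟧) = geomPoly R N := by
  ext m
  rw [coeff_trunc, geomPoly, finsetSum_coeff,
    Fin.sum_univ_eq_sum_range (fun i => (Polynomial.X ^ (i + 1) : R[X]).coeff m)]
  rcases m with _ | m
  · simp
  · simp [Polynomial.coeff_X_pow, coeff_succ_X_mul]

theorem PowerSeries.coeff_X_mul_mk_one_pow {R : Type*} [CommRing R] (n k : ℕ) :
    coeff (n + 1) ((X * mk 1 : R⟦X⟧) ^ (k + 1)) = n.choose k := by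
  rw [mul_pow, mk_one_pow_eq_mk_choose_add, coeff_X_pow_mul', coeff_mk]
  split_ifs with h
  · congr 2; omega
  · rw [Nat.choose_eq_zero_of_lt (by omega), Nat.cast_zero]

theorem coeff_geomPoly_pow_succ {R : Type*} [CommRing R] {N n : ℕ} (hn : n < N) (k : ℕ) :
    (geomPoly R N ^ (k + 1)).coeff (n + 1) = n.choose k := by
  set G : R⟦X⟧ := PowerSeries.X * PowerSeries.mk 1
  have hN : n + 1 < N + 1 := by omega
  calc (geomPoly R N ^ (k + 1)).coeff (n + 1)
      = (PowerSeries.trunc (N + 1) ((PowerSeries.trunc (N + 1) G : R⟦X⟧) ^ (k + 1))).coeff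
          (n + 1) := by
        rw [PowerSeries.coeff_trunc, if_pos hN, ← Polynomial.coe_pow, Polynomial.coeff_coe,
          PowerSeries.trunc_X_mul_mk_one]
    _ = n.choose k := by
      rw [PowerSeries.trunc_trunc_pow, PowerSeries.coeff_trunc, if_pos hN,
        PowerSeries.coeff_X_mul_mk_one_pow]

theorem sum_le_sum_succ_mul {N : ℕ} (s : Fin N → ℕ) :
    ∑ i, s i ≤ ∑ i : Fin N, ((i : ℕ) + 1) * s i :=
  sum_le_sum fun i _ => Nat.le_mul_of_pos_left _ (Nat.succ_pos i)

theorem coeff_geomPoly_pow_eq_sum_weightedTuples {R : Type*} [CommSemiring R] (n k : ℕ) :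
    (geomPoly R n ^ k).coeff n =
      ∑ t ∈ (weightedTuples n).filter (fun t => ∑ i, (t i : ℕ) = k),
        (Nat.multinomial univ (fun i => (t i : ℕ)) : R) := by
  rw [coeff_geomPoly_pow]
  symm
  refine sum_nbij (fun t i => (t i : ℕ)) ?_ ?_ ?_ fun _ _ => rfl
  · intro t ht
    simp only [weightedTuples, mem_filter, mem_univ, true_and] at ht
    simp [mem_piAntidiag, ht]
  · intro t₁ _ t₂ _ h
    exact funext fun i => Fin.ext (congrFun h i)
  · intro s hs
    simp only [coe_filter, mem_piAntidiag, mem_univ, Set.mem_ofPred_eq] at hs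
    have hle : ∀ i, s i < n + 1 := fun i => Nat.lt_succ_of_le <|
      (single_le_sum (fun j _ => Nat.zero_le (s j)) (mem_univ i)).trans
        ((sum_le_sum_succ_mul s).trans hs.2.le)
    refine ⟨fun i => ⟨s i, hle i⟩, ?_, rfl⟩
    simp [weightedTuples, hs.1.1, hs.2]

theorem sum_choose_mul_div (m : ℕ) :
    ∑ k ∈ range (m + 1), (m.choose k : ℚ) * (((m + 1 : ℕ) : ℚ) / ((k + 1 : ℕ) : ℚ)) =
      2 ^ (m + 1) - 1 := by
  have hterm : ∀ k, (m.choose k : ℚ) * (((m + 1 : ℕ) : ℚ) / ((k + 1 : ℕ) : ℚ)) =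
      (m + 1).choose (k + 1) := by
    intro k
    rw [mul_div_assoc', div_eq_iff (by positivity), mul_comm]
    exact_mod_cast Nat.add_one_mul_choose_eq m k
  have hsum := Nat.sum_range_choose (m + 1)
  rw [sum_range_succ', Nat.choose_zero_right] at hsum
  rw [sum_congr rfl fun k _ => hterm k, eq_sub_iff_add_eq]
  exact_mod_cast hsum

theorem stmt15 (n : ℕ) (hn : 0 < n) :
    1 + ∑ t ∈ weightedTuples n,
        (Nat.multinomial Finset.univ (fun i => (t i : ℕ)) : ℚ) *
          ((n : ℚ) / ((∑ i : Fin n, (t i : ℕ) : ℕ) : ℚ))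
      = 2 ^ n := by
  have hcard : ∀ t ∈ weightedTuples n, ∑ i, (t i : ℕ) ∈ range (n + 1) := fun t ht =>
    mem_range_succ_iff.2 ((sum_le_sum_succ_mul _).trans (mem_filter.1 ht).2.le)
  have hfiber : ∀ k, ∑ t ∈ (weightedTuples n).filter (fun t => ∑ i, (t i : ℕ) = k),
      (Nat.multinomial univ (fun i => (t i : ℕ)) : ℚ) * ((n : ℚ) / ((∑ i, (t i : ℕ) : ℕ) : ℚ)) =
        (geomPoly ℚ n ^ k).coeff n * ((n : ℚ) / (k : ℚ)) := by
    intro k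
    rw [coeff_geomPoly_pow_eq_sum_weightedTuples, sum_mul]
    exact sum_congr rfl fun t ht => by rw [(mem_filter.1 ht).2]
  rw [← sum_fiberwise_of_maps_to hcard, sum_congr rfl fun k _ => hfiber k]
  obtain ⟨m, rfl⟩ := Nat.exists_eq_add_one_of_ne_zero hn.ne'
  -- the `k = 0` fibre is empty, and its term vanishes anyway since `n / 0 = 0` in `ℚ`
  rw [sum_range_succ', Nat.cast_zero, div_zero, mul_zero, add_zero]
  simp_rw [coeff_geomPoly_pow_succ (Nat.lt_succ_self m)]
  rw [sum_choose_mul_div]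
  ring
end

section
/- For every nonnegative integer n, the sum over k from 0 to n of the rational number (−1/(2k−1)) · C(2k,k) · C(2n−2k, n−k) equals 1 if n = 0 and equals 0 if n > 0. -/
open Finset

lemma lemA (n : ℕ) :
    2 * ∑ j ∈ Finset.range (n + 1), (n - j + 1) * (catalan j * catalan (n - j))
      = (n + 2) * catalan (n + 1) := by
  have hrefl : ∑ j ∈ Finset.range (n + 1), (n - j + 1) * (catalan j * catalan (n - j))
      = ∑ j ∈ Finset.range (n + 1), (j + 1) * (catalan j * catalan (n - j)) := by
    rw [← Finset.sum_range_reflect (fun j => (j + 1) * (catalan j * catalan (n - j))) (n + 1)]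
    apply Finset.sum_congr rfl
    intro j hj
    simp only [Finset.mem_range] at hj
    have h2 : n + 1 - 1 - j = n - j := by omega
    rw [h2]
    have h1 : n - (n - j) = j := by omega
    rw [h1]
    ring
  have hcat : catalan (n + 1) = ∑ j ∈ Finset.range (n + 1), catalan j * catalan (n - j) := by
    rw [catalan_succ]
    rw [Finset.sum_range]
  calc 2 * ∑ j ∈ Finset.range (n + 1), (n - j + 1) * (catalan j * catalan (n - j))
      = ∑ j ∈ Finset.range (n + 1), (n - j + 1) * (catalan j * catalan (n - j))
        + ∑ j ∈ Finset.range (n + 1), (j + 1) * (catalan j * catalan (n - j)) := by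
        rw [← hrefl]; ring
    _ = ∑ j ∈ Finset.range (n + 1), (n + 2) * (catalan j * catalan (n - j)) := by
        rw [← Finset.sum_add_distrib]
        apply Finset.sum_congr rfl
        intro j hj
        simp only [Finset.mem_range] at hj
        have : n - j + 1 + (j + 1) = n + 2 := by omega
        rw [← add_mul, this]
    _ = (n + 2) * catalan (n + 1) := by rw [← Finset.mul_sum, ← hcat]

lemma lemB (n : ℕ) :
    2 * ∑ j ∈ Finset.range (n + 1), catalan j * Nat.centralBinom (n - j)
      = Nat.centralBinom (n + 1) := by
  have : ∑ j ∈ Finset.range (n + 1), catalan j * Nat.centralBinom (n - j)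
      = ∑ j ∈ Finset.range (n + 1), (n - j + 1) * (catalan j * catalan (n - j)) := by
    apply Finset.sum_congr rfl
    intro j hj
    rw [← succ_mul_catalan_eq_centralBinom]
    ring
  rw [this, lemA, succ_mul_catalan_eq_centralBinom]

lemma lemC (k : ℕ) :
    (-1 / (2 * ((k:ℚ) + 1) - 1)) * (Nat.centralBinom (k + 1) : ℚ) = -2 * catalan k := by
  have hb : Nat.centralBinom (k + 1) = 2 * (2 * k + 1) * catalan k := by
    have h1 := Nat.succ_mul_centralBinom_succ k
    have h2 := succ_mul_catalan_eq_centralBinom k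
    have : (k + 1) * Nat.centralBinom (k + 1) = (k + 1) * (2 * (2 * k + 1) * catalan k) := by
      rw [h1, ← h2]; ring
    exact Nat.eq_of_mul_eq_mul_left (by omega) this
  rw [hb]
  push_cast
  have hne : 2 * ((k:ℚ) + 1) - 1 ≠ 0 := by
    have : (0:ℚ) ≤ (k:ℚ) := Nat.cast_nonneg k
    intro h; nlinarith
  field_simp
  ring

theorem stmt17 (n : ℕ) :
    ∑ k ∈ Finset.range (n + 1),
      (-1 / (2 * (k : ℚ) - 1)) * (Nat.choose (2 * k) k : ℚ) *
        (Nat.choose (2 * n - 2 * k) (n - k) : ℚ)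
      = if n = 0 then 1 else 0 := by
  cases n with
  | zero => norm_num
  | succ m =>
    simp only [Nat.succ_ne_zero, if_neg, if_false]
    rw [Finset.sum_range_succ']
    have h0 : (-1 / (2 * ((0:ℕ) : ℚ) - 1)) * (Nat.choose (2 * 0) 0 : ℚ) *
        (Nat.choose (2 * (m+1) - 2 * 0) (m + 1 - 0) : ℚ) = (Nat.centralBinom (m+1) : ℚ) := by
      norm_num [Nat.centralBinom_eq_two_mul_choose]
    rw [h0]
    have hsum : ∑ i ∈ Finset.range (m + 1),
        (-1 / (2 * ((i+1 : ℕ) : ℚ) - 1)) * (Nat.choose (2 * (i+1)) (i+1) : ℚ) *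
          (Nat.choose (2 * (m+1) - 2 * (i+1)) (m + 1 - (i+1)) : ℚ)
        = ∑ i ∈ Finset.range (m + 1), (-2 * catalan i) * (Nat.centralBinom (m - i) : ℚ) := by
      apply Finset.sum_congr rfl
      intro i hi
      simp only [Finset.mem_range] at hi
      have h1 : 2 * (m + 1) - 2 * (i + 1) = 2 * (m - i) := by omega
      have h2 : m + 1 - (i + 1) = m - i := by omega
      have h3 : Nat.choose (2 * (i+1)) (i+1) = Nat.centralBinom (i+1) :=
        (Nat.centralBinom_eq_two_mul_choose _).symm
      have h4 : Nat.choose (2 * (m - i)) (m - i) = Nat.centralBinom (m - i) :=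
        (Nat.centralBinom_eq_two_mul_choose _).symm
      rw [h1, h2, h3, h4]
      have := lemC i
      push_cast at this ⊢
      rw [mul_comm 2 ((i:ℚ) + 1)] at this
      rw [show 2 * ((i:ℚ) + 1) - 1 = ((i:ℚ)+1) * 2 - 1 by ring] at *
      rw [this]
    rw [hsum]
    have hB := lemB m
    have hBQ : (2 : ℚ) * ∑ j ∈ Finset.range (m + 1), (catalan j : ℚ) * (Nat.centralBinom (m - j) : ℚ)
        = (Nat.centralBinom (m + 1) : ℚ) := by
      have := congrArg (fun x : ℕ => (x : ℚ)) hB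
      push_cast at this
      exact this
    calc ∑ i ∈ Finset.range (m + 1), (-2 * catalan i) * (Nat.centralBinom (m - i) : ℚ)
          + (Nat.centralBinom (m+1) : ℚ)
        = -(2 * ∑ j ∈ Finset.range (m + 1), (catalan j : ℚ) * (Nat.centralBinom (m - j) : ℚ))
          + (Nat.centralBinom (m+1) : ℚ) := by
          rw [Finset.mul_sum]
          congr 1
          rw [← Finset.sum_neg_distrib]
          apply Finset.sum_congr rfl
          intro i _; ring
      _ = 0 := by rw [hBQ]; ring
end
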